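/- Let (Ω, F, P) be a probability space, (F_{n,j})_{j=0}^{N_n} filtrations, and Y_{n,j} real random variables with Y_{n,j} measurable with respect to F_{n,j}. If for every ε > 0 the sums Σ_{j=1}^{N_n} P(|Y_{n,j}| > ε | F_{n,j-1}) converge to 0 in probability as n → ∞, then max_{1 ≤ j ≤ N_n} |Y_{n,j}| → 0 in probability. -/

import Mathlib

/-!
Write `A_j = ∑_{i ≤ j} E[X_i | F_{i-1}]` for nonnegative `X_i`. The events `{A_j < d}` are
`F_{j-1}`-measurable, so the truncated sum `Z = ∑_j 1_{A_j < d} X_j` has the same expectation as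
`∑_j 1_{A_j < d} E[X_j | F_{j-1}]`, which is pointwise below `d`. Outside `{A_M ≥ d}` all
truncations are inactive and `Z = ∑_j X_j`, so Markov's inequality gives the Lenglart-type bound
`P(∑_j X_j ≥ c) ≤ d / c + P(A_M ≥ d)`. Hence `∑_j X_{n,j} → 0` in probability as soon as the
compensators do; apply this to `X_{n,j} = 1_{|Y_{n,j}| > ε/2}`, whose sum is at least `1` when
some `|Y_{n,j}| ≥ ε`.
-/

open MeasureTheory Filter Finset

lemma sum_ite_sum_Icc_lt {g : ℕ → ℝ} (hg : ∀ i, 0 ≤ g i) {d : ℝ} (hd : 0 < d) (M : ℕ) :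
    ∑ j ∈ Icc 1 M, (if ∑ i ∈ Icc 1 j, g i < d then g j else 0) < d := by
  induction M with
  | zero => simpa using hd
  | succ M ih =>
    rw [sum_Icc_succ_top (by omega)]
    split_ifs with h
    · calc ∑ j ∈ Icc 1 M, (if ∑ i ∈ Icc 1 j, g i < d then g j else 0) + g (M + 1)
          ≤ ∑ j ∈ Icc 1 M, g j + g (M + 1) := by
            gcongr with j
            split_ifs
            exacts [le_rfl, hg j]
        _ = ∑ i ∈ Icc 1 (M + 1), g i := (sum_Icc_succ_top (by omega) g).symm
        _ < d := h
    · simpa using ih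

section Lenglart

variable {Ω : Type*} {m₀ : MeasurableSpace Ω} {μ : Measure Ω} {F : ℕ → MeasurableSpace Ω}

noncomputable def compensator (μ : Measure Ω) (F : ℕ → MeasurableSpace Ω) (X : ℕ → Ω → ℝ)
    (j : ℕ) (ω : Ω) : ℝ :=
  ∑ i ∈ Icc 1 j, μ[X i | F (i - 1)] ω

lemma measurableSet_compensator_lt (hF : Monotone F) (X : ℕ → Ω → ℝ) (j : ℕ) (d : ℝ) :
    MeasurableSet[F (j - 1)] {ω | compensator μ F X j ω < d} := by
  refine measurableSet_lt ?_ measurable_const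
  refine (Finset.stronglyMeasurable_fun_sum _ fun i hi => ?_).measurable
  exact stronglyMeasurable_condExp.mono (hF (by grind))

variable [IsProbabilityMeasure μ] {X : ℕ → Ω → ℝ} {M : ℕ} {d : ℝ}

lemma integral_sum_indicator_compensator_lt_le (hF : Monotone F) (hF_le : ∀ j, F j ≤ m₀)
    (hX_nonneg : ∀ j, 0 ≤ᵐ[μ] X j) (hX_int : ∀ j ∈ Icc 1 M, Integrable (X j) μ) (hd : 0 < d) :
    ∫ ω, ∑ j ∈ Icc 1 M, {ω | compensator μ F X j ω < d}.indicator (X j) ω ∂μ ≤ d := by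
  set B : ℕ → Set Ω := fun j => {ω | compensator μ F X j ω < d}
  have hB (j : ℕ) : MeasurableSet (B j) :=
    hF_le (j - 1) _ (measurableSet_compensator_lt hF X j d)
  have hg_nonneg : ∀ᵐ ω ∂μ, ∀ i, 0 ≤ μ[X i | F (i - 1)] ω :=
    ae_all_iff.mpr fun i => condExp_nonneg (hX_nonneg i)
  calc ∫ ω, ∑ j ∈ Icc 1 M, (B j).indicator (X j) ω ∂μ
      = ∑ j ∈ Icc 1 M, ∫ ω in B j, X j ω ∂μ := by
        rw [integral_finsetSum _ fun j hj => (hX_int j hj).indicator (hB j)]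
        exact sum_congr rfl fun j _ => integral_indicator (hB j)
    _ = ∑ j ∈ Icc 1 M, ∫ ω in B j, μ[X j | F (j - 1)] ω ∂μ :=
        sum_congr rfl fun j hj => (setIntegral_condExp (hF_le (j - 1)) (hX_int j hj)
          (measurableSet_compensator_lt hF X j d)).symm
    _ = ∫ ω, ∑ j ∈ Icc 1 M, (B j).indicator (μ[X j | F (j - 1)]) ω ∂μ := by
        rw [integral_finsetSum _ fun j _ => integrable_condExp.indicator (hB j)]
        exact sum_congr rfl fun j _ => (integral_indicator (hB j)).symm
    _ ≤ ∫ _, d ∂μ := by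
        refine integral_mono_ae (integrable_finsetSum _ fun j _ =>
          integrable_condExp.indicator (hB j)) (integrable_const d) ?_
        filter_upwards [hg_nonneg] with ω hω
        exact (sum_ite_sum_Icc_lt hω hd M).le
    _ = d := by simp

/-- Lenglart's inequality for sums of nonnegative random variables. -/
theorem measure_le_sum_le_ofReal_add_measure_le_compensator (hF : Monotone F)
    (hF_le : ∀ j, F j ≤ m₀) (hX_nonneg : ∀ j, 0 ≤ᵐ[μ] X j)
    (hX_int : ∀ j ∈ Icc 1 M, Integrable (X j) μ) {c : ℝ} (hc : 0 < c) (hd : 0 < d) :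
    μ {ω | c ≤ ∑ j ∈ Icc 1 M, X j ω} ≤
      ENNReal.ofReal (d / c) + μ {ω | d ≤ compensator μ F X M ω} := by
  set Z : Ω → ℝ := fun ω => ∑ j ∈ Icc 1 M, {ω | compensator μ F X j ω < d}.indicator (X j) ω
  have hZ_int : Integrable Z μ := integrable_finsetSum _ fun j hj =>
    (hX_int j hj).indicator (hF_le (j - 1) _ (measurableSet_compensator_lt hF X j d))
  have hZ_nonneg : 0 ≤ᵐ[μ] Z := by
    filter_upwards [ae_all_iff.mpr hX_nonneg] with ω hω
    exact sum_nonneg fun j _ => Set.indicator_nonneg (fun _ _ => hω j) ω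
  have hMarkov : μ {ω | c ≤ Z ω} ≤ ENNReal.ofReal (d / c) := by
    rw [ENNReal.le_ofReal_iff_toReal_le (measure_ne_top _ _) (by positivity), le_div_iff₀ hc,
      ← measureReal_def]
    have := mul_meas_ge_le_integral_of_nonneg hZ_nonneg hZ_int c
    linarith [integral_sum_indicator_compensator_lt_le hF hF_le hX_nonneg hX_int hd]
  have hZ_eq : ∀ᵐ ω ∂μ, compensator μ F X M ω < d → Z ω = ∑ j ∈ Icc 1 M, X j ω := by
    filter_upwards [ae_all_iff.mpr fun i => condExp_nonneg (m := F (i - 1)) (hX_nonneg i)]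
      with ω hω hA
    refine sum_congr rfl fun j hj => Set.indicator_of_mem ?_ _
    exact lt_of_le_of_lt (sum_le_sum_of_subset_of_nonneg (Icc_subset_Icc_right (mem_Icc.mp hj).2)
      fun i _ _ => hω i) hA
  calc μ {ω | c ≤ ∑ j ∈ Icc 1 M, X j ω}
      ≤ μ ({ω | c ≤ Z ω} ∪ {ω | d ≤ compensator μ F X M ω}) := by
        refine measure_mono_ae ?_
        filter_upwards [hZ_eq] with ω hω hc
        by_cases hA : compensator μ F X M ω < d
        · exact Or.inl (show c ≤ Z ω by rw [hω hA]; exact hc)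
        · exact Or.inr (not_lt.mp hA)
    _ ≤ μ {ω | c ≤ Z ω} + μ {ω | d ≤ compensator μ F X M ω} := measure_union_le _ _
    _ ≤ ENNReal.ofReal (d / c) + μ {ω | d ≤ compensator μ F X M ω} := by gcongr

end Lenglart

theorem tendsto_measure_le_sum_of_tendsto_measure_le_compensator
    {Ω : ℕ → Type*} [∀ n, MeasurableSpace (Ω n)] {P : ∀ n, Measure (Ω n)}
    [∀ n, IsProbabilityMeasure (P n)] {N : ℕ → ℕ} {F : ∀ n, ℕ → MeasurableSpace (Ω n)}
    (hF : ∀ n, Monotone (F n)) (hF_le : ∀ n j, F n j ≤ (inferInstance : MeasurableSpace (Ω n)))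
    {X : ∀ n, ℕ → Ω n → ℝ} (hX_nonneg : ∀ n j, 0 ≤ᵐ[P n] X n j)
    (hX_int : ∀ n, ∀ j ∈ Icc 1 (N n), Integrable (X n j) (P n))
    (hA : ∀ d > (0 : ℝ), Tendsto (fun n => P n {ω | d ≤ compensator (P n) (F n) (X n) (N n) ω})
      atTop (nhds 0))
    {c : ℝ} (hc : 0 < c) :
    Tendsto (fun n => P n {ω | c ≤ ∑ j ∈ Icc 1 (N n), X n j ω}) atTop (nhds 0) := by
  rw [ENNReal.tendsto_nhds_zero]
  intro δ hδ
  obtain ⟨r, -, hr_pos, hr_lt⟩ := ENNReal.lt_iff_exists_real_btwn.mp (ENNReal.half_pos hδ.ne')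
  have hr : 0 < r := ENNReal.ofReal_pos.mp hr_pos
  filter_upwards [ENNReal.tendsto_nhds_zero.mp (hA (r * c) (by positivity)) (δ / 2)
    (ENNReal.half_pos hδ.ne')] with n hn
  calc P n {ω | c ≤ ∑ j ∈ Icc 1 (N n), X n j ω}
      ≤ ENNReal.ofReal (r * c / c) + P n {ω | r * c ≤ compensator (P n) (F n) (X n) (N n) ω} :=
        measure_le_sum_le_ofReal_add_measure_le_compensator (hF n) (hF_le n) (hX_nonneg n)
          (hX_int n) hc (by positivity)
    _ ≤ δ / 2 + δ / 2 := by
        gcongr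
        rw [mul_div_cancel_right₀ r hc.ne']
        exact hr_lt.le
    _ = δ := ENNReal.add_halves δ

/-- If the sums of conditional probabilities `P(|Y_{n,j}| > ε | F_{n,j-1})` tend to 0 in
probability for every `ε > 0`, then `max_j |Y_{n,j}| → 0` in probability. -/
theorem stmt_7
    (Ω : ℕ → Type*) [∀ n, MeasurableSpace (Ω n)]
    (P : ∀ n, Measure (Ω n)) [∀ n, IsProbabilityMeasure (P n)]
    (N : ℕ → ℕ)
    (F : ∀ n, ℕ → MeasurableSpace (Ω n))
    (hF_mono : ∀ n, Monotone (F n))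
    (hF_le : ∀ n j, F n j ≤ (inferInstance : MeasurableSpace (Ω n)))
    (Y : ∀ n, ℕ → Ω n → ℝ)
    (hY_meas : ∀ n, ∀ j ∈ Finset.Icc 1 (N n), Measurable[F n j] (Y n j))
    (hsum : ∀ ε > (0:ℝ), ∀ ε' > (0:ℝ), Tendsto
      (fun n => P n {ω | ε' ≤ ∑ j ∈ Finset.Icc 1 (N n),
        ((P n)[Set.indicator {ω' | ε < |Y n j ω'|} (fun _ => (1:ℝ)) | F n (j - 1)]) ω})
      atTop (nhds 0)) :
    ∀ ε > (0:ℝ), Tendsto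
      (fun n => P n {ω | ∃ j ∈ Finset.Icc 1 (N n), ε ≤ |Y n j ω|})
      atTop (nhds 0) := by
  intro ε hε
  set X : ∀ n, ℕ → Ω n → ℝ := fun n j => {ω | ε / 2 < |Y n j ω|}.indicator fun _ => 1
  have hX_nonneg (n j) : 0 ≤ X n j := Set.indicator_nonneg (fun _ _ => zero_le_one)
  have hX_int (n) : ∀ j ∈ Icc 1 (N n), Integrable (X n j) (P n) := fun j hj =>
    (integrable_const 1).indicator <| measurableSet_lt measurable_const
      ((hY_meas n j hj).mono (hF_le n j) le_rfl).abs
  have hsum_X := tendsto_measure_le_sum_of_tendsto_measure_le_compensator hF_mono hF_le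
    (fun n j => Eventually.of_forall (hX_nonneg n j)) hX_int (hsum (ε / 2) (half_pos hε)) one_pos
  refine tendsto_of_tendsto_of_tendsto_of_le_of_le tendsto_const_nhds hsum_X (fun _ => bot_le)
    fun n => measure_mono ?_
  rintro ω ⟨j, hj, hεj⟩
  have hXj : X n j ω = 1 :=
    Set.indicator_of_mem (s := {ω | ε / 2 < |Y n j ω|}) ((half_lt_self hε).trans_le hεj) _
  calc (1 : ℝ) = X n j ω := hXj.symm
    _ ≤ ∑ j ∈ Icc 1 (N n), X n j ω := single_le_sum (fun i _ => hX_nonneg n i ω) hj
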